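/- Let m ≥ 2 and n ≥ 1 be integers and let ν ↦ A_ν be a linear Hermitian family of n×n matrices such that all eigenvalues of A_ν are nonzero (equivalently, A_ν is invertible) for every ν ∈ ℝ^m with |ν| = 1. Then for every ν with |ν| = 1, the number of positive eigenvalues of A_ν, counted with multiplicity, equals the number of negative eigenvalues of A_ν counted with multiplicity; in particular each of these numbers equals n/2. -/

import Mathlib

/-! The number of positive eigenvalues of a Hermitian matrix `A` is the largest dimension of a
subspace on which `x ↦ re ⟪x, A x⟫` is positive definite, and similarly for negative eigenvalues.
Positive definiteness on the span of the positive eigenvectors survives small perturbations, so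
both counts are lower semicontinuous; on invertible matrices they add up to `n`, hence are locally
constant. For `m ≥ 2` the unit sphere is connected, so `A ν` and `A (-ν) = -A ν` have the same
number of positive eigenvalues, and that of `-A ν` is the number of negative eigenvalues of `A ν`.
-/

open scoped InnerProductSpace
open Finset RCLike Filter Topology Module

theorem exists_pos_forall_le_of_pos {ι : Type*} [Fintype ι] (f : ι → ℝ) :
    ∃ c > 0, ∀ i, 0 < f i → c ≤ f i := by
  rcases (univ.filter fun i => 0 < f i).eq_empty_or_nonempty with hempty | hne
  · rw [filter_eq_empty_iff] at hempty
    exact ⟨1, one_pos, fun i hi => absurd hi (hempty (mem_univ i))⟩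
  · obtain ⟨j, hj, hmin⟩ := exists_min_image _ f hne
    exact ⟨f j, (mem_filter.1 hj).2, fun i hi => hmin i (mem_filter.2 ⟨mem_univ i, hi⟩)⟩

theorem re_inner_pos_of_norm_sub_lt {𝕜 E : Type*} [RCLike 𝕜] [NormedAddCommGroup E]
    [InnerProductSpace 𝕜 E] {S T : E →L[𝕜] E} {c : ℝ} {x : E} (hx : x ≠ 0)
    (hT : c * ‖x‖ ^ 2 ≤ re ⟪x, T x⟫_𝕜) (hST : ‖S - T‖ < c) : 0 < re ⟪x, S x⟫_𝕜 := by
  have hdiff : |re ⟪x, (S - T) x⟫_𝕜| ≤ ‖S - T‖ * ‖x‖ ^ 2 :=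
    calc |re ⟪x, (S - T) x⟫_𝕜|
        ≤ ‖x‖ * ‖(S - T) x‖ := (abs_re_le_norm _).trans (norm_inner_le_norm _ _)
      _ ≤ ‖x‖ * (‖S - T‖ * ‖x‖) := by gcongr; exact (S - T).le_opNorm x
      _ = ‖S - T‖ * ‖x‖ ^ 2 := by ring
  have hsplit : re ⟪x, S x⟫_𝕜 = re ⟪x, T x⟫_𝕜 + re ⟪x, (S - T) x⟫_𝕜 := by
    simp [inner_sub_right]
  have hx2 : 0 < ‖x‖ ^ 2 := by positivity
  nlinarith [abs_le.mp hdiff]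

namespace Matrix.IsHermitian

variable {𝕜 : Type*} [RCLike 𝕜] {n : Type*} [Fintype n] [DecidableEq n] {A B : Matrix n n 𝕜}

theorem toEuclideanCLM_eigenvectorBasis (hA : A.IsHermitian) (j : n) :
    toEuclideanCLM (𝕜 := 𝕜) A (hA.eigenvectorBasis j) =
      (hA.eigenvalues j : 𝕜) • hA.eigenvectorBasis j := by
  apply WithLp.ofLp_injective
  rw [ofLp_toEuclideanCLM, hA.mulVec_eigenvectorBasis, WithLp.ofLp_smul,
    RCLike.real_smul_eq_coe_smul (K := 𝕜)]

theorem inner_eigenvectorBasis_toEuclideanCLM (hA : A.IsHermitian) (i : n)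
    (x : EuclideanSpace 𝕜 n) :
    ⟪hA.eigenvectorBasis i, toEuclideanCLM (𝕜 := 𝕜) A x⟫_𝕜 =
      hA.eigenvalues i * ⟪hA.eigenvectorBasis i, x⟫_𝕜 := by
  have hsymm := isSymmetric_toEuclideanLin_iff.mpr hA
  rw [← coe_toEuclideanCLM_eq_toEuclideanLin] at hsymm
  rw [← ContinuousLinearMap.coe_coe, ← hsymm, ContinuousLinearMap.coe_coe,
    toEuclideanCLM_eigenvectorBasis, inner_smul_left, conj_ofReal]

theorem re_inner_toEuclideanCLM (hA : A.IsHermitian) (x : EuclideanSpace 𝕜 n) :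
    re ⟪x, toEuclideanCLM (𝕜 := 𝕜) A x⟫_𝕜 =
      ∑ i, hA.eigenvalues i * ‖⟪hA.eigenvectorBasis i, x⟫_𝕜‖ ^ 2 := by
  rw [← hA.eigenvectorBasis.sum_inner_mul_inner, map_sum]
  refine Finset.sum_congr rfl fun i _ => ?_
  rw [inner_eigenvectorBasis_toEuclideanCLM, ← inner_conj_symm x, mul_left_comm, RCLike.conj_mul]
  norm_cast

noncomputable def eigenspan (hA : A.IsHermitian) (S : Finset n) :
    Submodule 𝕜 (EuclideanSpace 𝕜 n) :=
  Submodule.span 𝕜 (Set.range fun i : S => hA.eigenvectorBasis i)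

theorem finrank_eigenspan (hA : A.IsHermitian) (S : Finset n) :
    finrank 𝕜 (hA.eigenspan S) = #S := by
  rw [eigenspan, finrank_span_eq_card, Fintype.card_coe]
  exact hA.eigenvectorBasis.toBasis.linearIndependent.comp _ Subtype.val_injective

theorem inner_eigenvectorBasis_eq_zero_of_mem_eigenspan (hA : A.IsHermitian) {S : Finset n}
    {x : EuclideanSpace 𝕜 n} (hx : x ∈ hA.eigenspan S) {i : n} (hi : i ∉ S) :
    ⟪hA.eigenvectorBasis i, x⟫_𝕜 = 0 := by
  have hle : hA.eigenspan S ≤ LinearMap.ker (innerₛₗ 𝕜 (hA.eigenvectorBasis i)) := by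
    refine Submodule.span_le.mpr ?_
    rintro _ ⟨j, rfl⟩
    exact hA.eigenvectorBasis.orthonormal.2 fun hij => hi (hij ▸ j.2)
  exact hle hx

theorem re_inner_toEuclideanCLM_of_mem_eigenspan (hA : A.IsHermitian) {S : Finset n}
    {x : EuclideanSpace 𝕜 n} (hx : x ∈ hA.eigenspan S) :
    re ⟪x, toEuclideanCLM (𝕜 := 𝕜) A x⟫_𝕜 =
      ∑ i ∈ S, hA.eigenvalues i * ‖⟪hA.eigenvectorBasis i, x⟫_𝕜‖ ^ 2 := by
  rw [re_inner_toEuclideanCLM, ← sum_subset (subset_univ S)]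
  intro i _ hi
  simp [inner_eigenvectorBasis_eq_zero_of_mem_eigenspan hA hx hi]

theorem norm_sq_of_mem_eigenspan (hA : A.IsHermitian) {S : Finset n}
    {x : EuclideanSpace 𝕜 n} (hx : x ∈ hA.eigenspan S) :
    ‖x‖ ^ 2 = ∑ i ∈ S, ‖⟪hA.eigenvectorBasis i, x⟫_𝕜‖ ^ 2 := by
  rw [← hA.eigenvectorBasis.sum_sq_norm_inner_right, ← sum_subset (subset_univ S)]
  intro i _ hi
  simp [inner_eigenvectorBasis_eq_zero_of_mem_eigenspan hA hx hi]

theorem mul_norm_sq_le_re_inner_of_mem_eigenspan (hA : A.IsHermitian) {S : Finset n} {c : ℝ}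
    (hc : ∀ i ∈ S, c ≤ hA.eigenvalues i) {x : EuclideanSpace 𝕜 n} (hx : x ∈ hA.eigenspan S) :
    c * ‖x‖ ^ 2 ≤ re ⟪x, toEuclideanCLM (𝕜 := 𝕜) A x⟫_𝕜 := by
  rw [re_inner_toEuclideanCLM_of_mem_eigenspan hA hx, norm_sq_of_mem_eigenspan hA hx, mul_sum]
  exact sum_le_sum fun i hi => by gcongr; exact hc i hi

theorem re_inner_le_mul_norm_sq_of_mem_eigenspan (hA : A.IsHermitian) {S : Finset n} {c : ℝ}
    (hc : ∀ i ∈ S, hA.eigenvalues i ≤ c) {x : EuclideanSpace 𝕜 n} (hx : x ∈ hA.eigenspan S) :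
    re ⟪x, toEuclideanCLM (𝕜 := 𝕜) A x⟫_𝕜 ≤ c * ‖x‖ ^ 2 := by
  rw [re_inner_toEuclideanCLM_of_mem_eigenspan hA hx, norm_sq_of_mem_eigenspan hA hx, mul_sum]
  exact sum_le_sum fun i hi => by gcongr; exact hc i hi

noncomputable def posCount (hA : A.IsHermitian) : ℕ := #{i | 0 < hA.eigenvalues i}

noncomputable def negCount (hA : A.IsHermitian) : ℕ := #{i | hA.eigenvalues i < 0}

theorem posCount_congr (hA : A.IsHermitian) (hB : B.IsHermitian) (h : A = B) :
    hA.posCount = hB.posCount := by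
  subst h; rfl

theorem finrank_add_card_le_of_disjoint_eigenspan (hA : A.IsHermitian)
    {W : Submodule 𝕜 (EuclideanSpace 𝕜 n)} {S : Finset n} (hWS : Disjoint W (hA.eigenspan S)) :
    finrank 𝕜 W + #S ≤ Fintype.card n := by
  rw [← hA.finrank_eigenspan S, ← finrank_euclideanSpace (𝕜 := 𝕜)]
  exact Submodule.finrank_add_finrank_le_of_disjoint hWS

theorem finrank_le_posCount (hA : A.IsHermitian) {W : Submodule 𝕜 (EuclideanSpace 𝕜 n)}
    (hW : ∀ x ∈ W, x ≠ 0 → 0 < re ⟪x, toEuclideanCLM (𝕜 := 𝕜) A x⟫_𝕜) :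
    finrank 𝕜 W ≤ hA.posCount := by
  have hdisj : Disjoint W (hA.eigenspan {i | hA.eigenvalues i ≤ 0}) := by
    refine Submodule.disjoint_def.mpr fun x hxW hxV => by_contra fun hx => ?_
    have hle := hA.re_inner_le_mul_norm_sq_of_mem_eigenspan (c := 0)
      (fun i hi => (mem_filter.1 hi).2) hxV
    linarith [hW x hxW hx]
  have hcard := card_filter_add_card_filter_not (s := univ) fun i => 0 < hA.eigenvalues i
  simp only [not_lt, card_univ] at hcard
  have := hA.finrank_add_card_le_of_disjoint_eigenspan hdisj
  rw [posCount]
  omega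

theorem finrank_le_negCount (hA : A.IsHermitian) {W : Submodule 𝕜 (EuclideanSpace 𝕜 n)}
    (hW : ∀ x ∈ W, x ≠ 0 → re ⟪x, toEuclideanCLM (𝕜 := 𝕜) A x⟫_𝕜 < 0) :
    finrank 𝕜 W ≤ hA.negCount := by
  have hdisj : Disjoint W (hA.eigenspan {i | 0 ≤ hA.eigenvalues i}) := by
    refine Submodule.disjoint_def.mpr fun x hxW hxV => by_contra fun hx => ?_
    have hle := hA.mul_norm_sq_le_re_inner_of_mem_eigenspan (c := 0)
      (fun i hi => (mem_filter.1 hi).2) hxV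
    linarith [hW x hxW hx]
  have hcard := card_filter_add_card_filter_not (s := univ) fun i => hA.eigenvalues i < 0
  simp only [not_lt, card_univ] at hcard
  have := hA.finrank_add_card_le_of_disjoint_eigenspan hdisj
  rw [negCount]
  omega

theorem exists_pos_mul_norm_sq_le_re_inner (hA : A.IsHermitian) :
    ∃ c > 0, ∀ x ∈ hA.eigenspan {i | 0 < hA.eigenvalues i},
      c * ‖x‖ ^ 2 ≤ re ⟪x, toEuclideanCLM (𝕜 := 𝕜) A x⟫_𝕜 := by
  obtain ⟨c, hc, hle⟩ := exists_pos_forall_le_of_pos hA.eigenvalues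
  exact ⟨c, hc, fun x hx =>
    hA.mul_norm_sq_le_re_inner_of_mem_eigenspan (fun i hi => hle i (mem_filter.1 hi).2) hx⟩

theorem exists_pos_re_inner_le_neg_mul_norm_sq (hA : A.IsHermitian) :
    ∃ c > 0, ∀ x ∈ hA.eigenspan {i | hA.eigenvalues i < 0},
      re ⟪x, toEuclideanCLM (𝕜 := 𝕜) A x⟫_𝕜 ≤ -c * ‖x‖ ^ 2 := by
  obtain ⟨c, hc, hle⟩ := exists_pos_forall_le_of_pos fun i => -hA.eigenvalues i
  refine ⟨c, hc, fun x hx => hA.re_inner_le_mul_norm_sq_of_mem_eigenspan (fun i hi => ?_) hx⟩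
  linarith [hle i (neg_pos.2 (mem_filter.1 hi).2)]

theorem re_inner_toEuclideanCLM_neg (x : EuclideanSpace 𝕜 n) :
    re ⟪x, toEuclideanCLM (𝕜 := 𝕜) (-A) x⟫_𝕜 = -re ⟪x, toEuclideanCLM (𝕜 := 𝕜) A x⟫_𝕜 := by
  simp [inner_neg_right]

theorem posCount_neg (hA : A.IsHermitian) : hA.neg.posCount = hA.negCount := by
  apply le_antisymm
  · obtain ⟨c, hc, hle⟩ := hA.neg.exists_pos_mul_norm_sq_le_re_inner
    rw [posCount, ← hA.neg.finrank_eigenspan]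
    refine hA.finrank_le_negCount fun x hx hx0 => ?_
    have hbound := hle x hx
    rw [re_inner_toEuclideanCLM_neg] at hbound
    have hpos : 0 < c * ‖x‖ ^ 2 := by positivity
    linarith
  · obtain ⟨c, hc, hle⟩ := hA.exists_pos_re_inner_le_neg_mul_norm_sq
    rw [negCount, ← hA.finrank_eigenspan]
    refine hA.neg.finrank_le_posCount fun x hx hx0 => ?_
    rw [re_inner_toEuclideanCLM_neg]
    have hpos : 0 < c * ‖x‖ ^ 2 := by positivity
    linarith [hle x hx]

theorem posCount_add_negCount (hA : A.IsHermitian) (hu : IsUnit A) :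
    hA.posCount + hA.negCount = Fintype.card n := by
  have hne : ∀ i, hA.eigenvalues i ≠ 0 := fun i h0 => by
    have hdet := ((isUnit_iff_isUnit_det A).mp hu).ne_zero
    rw [hA.det_eq_prod_eigenvalues, prod_ne_zero_iff] at hdet
    exact hdet i (mem_univ i) (by simp [h0])
  have hneg : (univ.filter fun i => hA.eigenvalues i < 0) =
      univ.filter fun i => ¬ 0 < hA.eigenvalues i :=
    filter_congr fun i _ =>
      ⟨fun h => not_lt.2 h.le, fun h => (not_lt.1 h).lt_of_ne (hne i)⟩
  rw [posCount, negCount, hneg, card_filter_add_card_filter_not, card_univ]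

theorem eventually_posCount_le (hA : A.IsHermitian) :
    ∀ᶠ B in 𝓝 A, ∀ hB : B.IsHermitian, hA.posCount ≤ hB.posCount := by
  obtain ⟨c, hc, hle⟩ := hA.exists_pos_mul_norm_sq_le_re_inner
  have hcont : Continuous (toEuclideanCLM (𝕜 := 𝕜) (n := n) : Matrix n n 𝕜 → _) :=
    (toEuclideanCLM (𝕜 := 𝕜) (n := n)).toAlgEquiv.toLinearMap.continuous_of_finiteDimensional
  filter_upwards [(hcont.tendsto A).eventually (Metric.ball_mem_nhds _ hc)] with B hB hBH
  rw [posCount, ← hA.finrank_eigenspan]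
  exact hBH.finrank_le_posCount fun x hx hx0 =>
    re_inner_pos_of_norm_sub_lt hx0 (hle x hx) (by simpa [dist_eq_norm] using hB)

theorem eventually_negCount_le (hA : A.IsHermitian) :
    ∀ᶠ B in 𝓝 A, ∀ hB : B.IsHermitian, hA.negCount ≤ hB.negCount := by
  filter_upwards [(tendsto_neg A).eventually hA.neg.eventually_posCount_le] with B hB hBH
  rw [← posCount_neg, ← posCount_neg]
  exact hB hBH.neg

theorem posCount_eq_of_isPreconnected {X : Type*} [TopologicalSpace X] {s : Set X}
    (hs : IsPreconnected s) {A : X → Matrix n n 𝕜} (hAc : ContinuousOn A s)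
    (hA : ∀ x, (A x).IsHermitian) (hu : ∀ x ∈ s, IsUnit (A x)) {x y : X} (hx : x ∈ s)
    (hy : y ∈ s) : (hA x).posCount = (hA y).posCount := by
  refine hs.constant (f := fun x => (hA x).posCount) (fun x hx => ?_) hx hy
  rw [ContinuousWithinAt, nhds_discrete, tendsto_pure]
  filter_upwards [self_mem_nhdsWithin, (hAc x hx).eventually (hA x).eventually_posCount_le,
    (hAc x hx).eventually (hA x).eventually_negCount_le] with y hy hpos hneg
  have hsum_x := (hA x).posCount_add_negCount (hu x hx)
  have hsum_y := (hA y).posCount_add_negCount (hu y hy)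
  have := hpos (hA y)
  have := hneg (hA y)
  omega

end Matrix.IsHermitian

theorem statement_2 (m n : ℕ) (hm : 2 ≤ m)
    (A : EuclideanSpace ℝ (Fin m) →ₗ[ℝ] Matrix (Fin n) (Fin n) ℂ)
    (hHerm : ∀ ν, (A ν).IsHermitian)
    (hinv : ∀ ν : EuclideanSpace ℝ (Fin m), ‖ν‖ = 1 → IsUnit (A ν)) :
    ∀ ν : EuclideanSpace ℝ (Fin m), ‖ν‖ = 1 →
      (Finset.univ.filter fun i => 0 < (hHerm ν).eigenvalues i).card =
        (Finset.univ.filter fun i => (hHerm ν).eigenvalues i < 0).card ∧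
      2 * (Finset.univ.filter fun i => 0 < (hHerm ν).eigenvalues i).card = n ∧
      2 * (Finset.univ.filter fun i => (hHerm ν).eigenvalues i < 0).card = n := by
  intro ν hν
  have hrank : 1 < Module.rank ℝ (EuclideanSpace ℝ (Fin m)) := by
    rw [← Module.finrank_eq_rank, finrank_euclideanSpace_fin]
    exact_mod_cast hm
  have hantipodal : (hHerm ν).posCount = (hHerm (-ν)).posCount :=
    Matrix.IsHermitian.posCount_eq_of_isPreconnected (isPreconnected_sphere hrank 0 1)
      A.continuous_of_finiteDimensional.continuousOn hHerm
      (fun μ hμ => hinv μ (by simpa using hμ)) (by simpa using hν) (by simpa using hν)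
  have hneg : (hHerm (-ν)).posCount = (hHerm ν).negCount := by
    rw [(hHerm (-ν)).posCount_congr (hHerm ν).neg (map_neg A ν), (hHerm ν).posCount_neg]
  have hsum := (hHerm ν).posCount_add_negCount (hinv ν hν)
  rw [Fintype.card_fin] at hsum
  change (hHerm ν).posCount = (hHerm ν).negCount ∧ 2 * (hHerm ν).posCount = n ∧
    2 * (hHerm ν).negCount = n
  omega
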